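/- Let Ŝ be a uniform sampling of [n] (meaning Prob(i ∈ Ŝ) is the same for all i) with |Ŝ| = τ almost surely, τ ≥ 1. Then λ(P(Ŝ)) = τ²/n. -/

import Mathlib

open Finset Matrix BigOperators

noncomputable def probMatrix {n : ℕ} {Ω : Type*} [Fintype Ω]
    (w : Ω → ℝ) (Shat : Ω → Finset (Fin n)) : Matrix (Fin n) (Fin n) ℝ :=
  fun i j => ∑ ω, if i ∈ Shat ω ∧ j ∈ Shat ω then w ω else 0

/-- Largest eigenvalue of a symmetric matrix: `λ(M) = sup { hᵀ M h : hᵀ h ≤ 1 }`. -/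
noncomputable def lambdaMax {n : ℕ} (M : Matrix (Fin n) (Fin n) ℝ) : ℝ :=
  sSup {r : ℝ | ∃ h : Fin n → ℝ, h ⬝ᵥ h ≤ 1 ∧ r = h ⬝ᵥ M.mulVec h}

/-! The quadratic form of `P(Ŝ)` is `hᵀ P h = E[(∑_{i ∈ Ŝ} hᵢ)²]`. Cauchy–Schwarz on each outcome
gives `(∑_{i ∈ Ŝ} hᵢ)² ≤ τ ∑_{i ∈ Ŝ} hᵢ²`, whose expectation is `τ ∑ᵢ Pᵢᵢ hᵢ² = τ²/n ‖h‖²`, because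
uniformity and `Tr P = E|Ŝ| = τ` force `Pᵢᵢ = τ/n`. The constant unit vector `hᵢ = 1/√n` attains
the bound. -/

theorem lambdaMax_eq_of_le_of_exists_eq {n : ℕ} {M : Matrix (Fin n) (Fin n) ℝ} {c : ℝ}
    (hle : ∀ h : Fin n → ℝ, h ⬝ᵥ h ≤ 1 → h ⬝ᵥ M *ᵥ h ≤ c)
    (hattain : ∃ h : Fin n → ℝ, h ⬝ᵥ h ≤ 1 ∧ h ⬝ᵥ M *ᵥ h = c) :
    lambdaMax M = c := by
  obtain ⟨h, hh, rfl⟩ := hattain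
  refine IsGreatest.csSup_eq ⟨⟨h, hh, rfl⟩, ?_⟩
  rintro _ ⟨g, hg, rfl⟩
  exact hle g hg

theorem Matrix.diag_eq_trace_div_of_diag_const {n : ℕ} {M : Matrix (Fin n) (Fin n) ℝ}
    (hconst : ∀ i j, M i i = M j j) (i : Fin n) : M i i = M.trace / n := by
  have hn : (n : ℝ) ≠ 0 := by exact_mod_cast i.pos.ne'
  rw [eq_div_iff hn, trace]
  simp [Matrix.diag, hconst _ i, mul_comm]

theorem Fintype.sum_mul_eq_of_forall_ne_zero {ι : Type*} [Fintype ι] {w g : ι → ℝ} {a : ℝ}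
    (h : ∀ i, w i ≠ 0 → g i = a) : ∑ i, w i * g i = (∑ i, w i) * a := by
  rw [Finset.sum_mul]
  refine Finset.sum_congr rfl fun i _ => ?_
  rcases eq_or_ne (w i) 0 with hi | hi
  · simp [hi]
  · rw [h i hi]

section
variable {n : ℕ} {Ω : Type*} [Fintype Ω] (w : Ω → ℝ) (Shat : Ω → Finset (Fin n))

theorem probMatrix_apply_self (i : Fin n) :
    probMatrix w Shat i i = ∑ ω, if i ∈ Shat ω then w ω else 0 := by
  simp [probMatrix]

theorem dotProduct_probMatrix_mulVec (h : Fin n → ℝ) :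
    h ⬝ᵥ probMatrix w Shat *ᵥ h = ∑ ω, w ω * (∑ i ∈ Shat ω, h i) ^ 2 := by
  simp_rw [← Fintype.sum_ite_mem (Shat _) h, sq, Fintype.sum_mul_sum, Finset.mul_sum]
  simp only [dotProduct, mulVec, probMatrix, Finset.mul_sum, Finset.sum_mul]
  rw [Finset.sum_congr rfl fun x _ => Finset.sum_comm, Finset.sum_comm]
  refine sum_congr rfl fun ω _ => sum_congr rfl fun x _ => sum_congr rfl fun y _ => ?_
  by_cases hx : x ∈ Shat ω <;> by_cases hy : y ∈ Shat ω <;> simp [hx, hy, mul_left_comm]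

theorem sum_mul_sum_eq_sum_probMatrix_apply_self_mul (f : Fin n → ℝ) :
    ∑ ω, w ω * ∑ i ∈ Shat ω, f i = ∑ i, probMatrix w Shat i i * f i := by
  simp_rw [probMatrix_apply_self, ← Fintype.sum_ite_mem (Shat _) f, Finset.sum_mul,
    Finset.mul_sum]
  rw [Finset.sum_comm]
  refine sum_congr rfl fun i _ => sum_congr rfl fun ω _ => ?_
  split_ifs <;> simp

theorem trace_probMatrix : trace (probMatrix w Shat) = ∑ ω, w ω * #(Shat ω) := by
  simpa [trace] using (sum_mul_sum_eq_sum_probMatrix_apply_self_mul w Shat fun _ => 1).symm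

theorem dotProduct_probMatrix_mulVec_le (hw0 : ∀ ω, 0 ≤ w ω) {τ : ℕ}
    (hcard : ∀ ω, w ω ≠ 0 → #(Shat ω) ≤ τ) (h : Fin n → ℝ) :
    h ⬝ᵥ probMatrix w Shat *ᵥ h ≤ τ * ∑ i, probMatrix w Shat i i * h i ^ 2 := by
  rw [dotProduct_probMatrix_mulVec, ← sum_mul_sum_eq_sum_probMatrix_apply_self_mul,
    Finset.mul_sum]
  refine Finset.sum_le_sum fun ω _ => ?_
  rcases eq_or_ne (w ω) 0 with hω | hω
  · simp [hω]
  · have hcs : (∑ i ∈ Shat ω, h i) ^ 2 ≤ τ * ∑ i ∈ Shat ω, h i ^ 2 :=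
      (sq_sum_le_card_mul_sum_sq).trans
        (by gcongr; exact_mod_cast hcard ω hω)
    rw [mul_left_comm]
    exact mul_le_mul_of_nonneg_left hcs (hw0 ω)

theorem dotProduct_probMatrix_mulVec_const {τ : ℕ} (hcard : ∀ ω, w ω ≠ 0 → #(Shat ω) = τ)
    (c : ℝ) :
    (fun _ => c) ⬝ᵥ probMatrix w Shat *ᵥ (fun _ => c) = (∑ ω, w ω) * (τ * c) ^ 2 := by
  rw [dotProduct_probMatrix_mulVec]
  refine Fintype.sum_mul_eq_of_forall_ne_zero fun ω hω => ?_
  rw [Finset.sum_const, hcard ω hω, nsmul_eq_mul]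

end

theorem lambdaMax_uniform_fixed_card_general
    {n : ℕ} {Ω : Type*} [Fintype Ω]
    (w : Ω → ℝ) (hw0 : ∀ ω, 0 ≤ w ω) (hw1 : ∑ ω, w ω = 1)
    (Shat : Ω → Finset (Fin n)) (τ : ℕ)
    (hcard : ∀ ω, w ω ≠ 0 → (Shat ω).card = τ)
    (huniform : ∀ i j : Fin n,
      (∑ ω, if i ∈ Shat ω then w ω else 0) = ∑ ω, if j ∈ Shat ω then w ω else 0) :
    lambdaMax (probMatrix w Shat) = (τ : ℝ) ^ 2 / n := by
  have htrace : trace (probMatrix w Shat) = τ := by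
    rw [trace_probMatrix, Fintype.sum_mul_eq_of_forall_ne_zero (a := (τ : ℝ))
      fun ω hω => by rw [hcard ω hω], hw1, one_mul]
  have hdiag (i : Fin n) : probMatrix w Shat i i = τ / n := by
    rw [← htrace]
    exact diag_eq_trace_div_of_diag_const
      (fun i j => by simpa only [probMatrix_apply_self] using huniform i j) i
  apply lambdaMax_eq_of_le_of_exists_eq
  · intro h hh
    calc h ⬝ᵥ probMatrix w Shat *ᵥ h
        ≤ τ * ∑ i, probMatrix w Shat i i * h i ^ 2 :=
          dotProduct_probMatrix_mulVec_le w Shat hw0 (fun ω hω => (hcard ω hω).le) h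
      _ = (τ : ℝ) ^ 2 / n * (h ⬝ᵥ h) := by
          simp only [hdiag, dotProduct, Finset.mul_sum]
          exact Finset.sum_congr rfl fun i _ => by ring
      _ ≤ (τ : ℝ) ^ 2 / n := mul_le_of_le_one_right (by positivity) hh
  · refine ⟨fun _ => 1 / √n, ?_, ?_⟩
    · simp only [dotProduct, one_div, Finset.sum_const, Finset.card_univ, Fintype.card_fin,
        nsmul_eq_mul, ← mul_inv, Real.mul_self_sqrt n.cast_nonneg]
      exact mul_inv_le_one
    · rw [dotProduct_probMatrix_mulVec_const w Shat hcard, hw1, one_mul, mul_one_div, div_pow,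
        Real.sq_sqrt n.cast_nonneg]

theorem lambdaMax_uniform_fixed_card
    {n : ℕ} {Ω : Type*} [Fintype Ω]
    (w : Ω → ℝ) (hw0 : ∀ ω, 0 ≤ w ω) (hw1 : ∑ ω, w ω = 1)
    (Shat : Ω → Finset (Fin n)) (τ : ℕ) (hτ : 1 ≤ τ)
    (hcard : ∀ ω, w ω ≠ 0 → (Shat ω).card = τ)
    (huniform : ∀ i j : Fin n,
      (∑ ω, if i ∈ Shat ω then w ω else 0) = ∑ ω, if j ∈ Shat ω then w ω else 0) :
    lambdaMax (probMatrix w Shat) = (τ : ℝ) ^ 2 / n :=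
  lambdaMax_uniform_fixed_card_general w hw0 hw1 Shat τ hcard huniform
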